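/- For all real η and θ: γR (η − 2) θ = (1 − D θ) * γR η θ, where 1 denotes the 2×2 identity matrix. -/

import Mathlib

open Real Matrix

/-- The chirality matrix `γ5` in the two-dimensional eigenvalue-pair representation. -/
noncomputable def γ5 : Matrix (Fin 2) (Fin 2) ℝ := !![1, 0; 0, -1]

/-- The overlap Dirac operator on a non-zero eigenvalue pair. -/
noncomputable def D (θ : ℝ) : Matrix (Fin 2) (Fin 2) ℝ :=
  (2 * Real.cos θ) • !![Real.cos θ, Real.sin θ; -Real.sin θ, Real.cos θ]

/-- The family of right chiral γ-matrices `γ_R^(η)`. -/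
noncomputable def γR (η θ : ℝ) : Matrix (Fin 2) (Fin 2) ℝ :=
  !![Real.cos ((1 + η) * (θ - π / 2)), Real.sin ((1 + η) * (θ - π / 2));
     Real.sin ((1 + η) * (θ - π / 2)), -Real.cos ((1 + η) * (θ - π / 2))]

/-- The family of left chiral γ-matrices `γ_L^(η) = γ5 γ_R^(−η) γ5`. -/
noncomputable def γL (η θ : ℝ) : Matrix (Fin 2) (Fin 2) ℝ := γ5 * γR (-η) θ * γ5

/-! `γR η θ` is the reflection with angle `(1 + η)(θ - π/2)` and `1 - D θ` is the rotation by
`π - 2θ = -2(θ - π/2)`; a rotation composed with a reflection is the reflection with the angles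
added, which lowers `1 + η` by `2`. -/

noncomputable def rotationMatrix (φ : ℝ) : Matrix (Fin 2) (Fin 2) ℝ :=
  !![cos φ, -sin φ; sin φ, cos φ]

/-- The reflection of the plane in the line at angle `α / 2`. -/
noncomputable def reflectionMatrix (α : ℝ) : Matrix (Fin 2) (Fin 2) ℝ :=
  !![cos α, sin α; sin α, -cos α]

theorem rotationMatrix_mul_reflectionMatrix (φ α : ℝ) :
    rotationMatrix φ * reflectionMatrix α = reflectionMatrix (φ + α) := by
  ext i j
  fin_cases i <;> fin_cases j <;>
    simp [rotationMatrix, reflectionMatrix, Matrix.mul_apply, cos_add, sin_add] <;> ring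

theorem γR_eq_reflectionMatrix (η θ : ℝ) :
    γR η θ = reflectionMatrix ((1 + η) * (θ - π / 2)) := rfl

theorem one_sub_D_eq_rotationMatrix (θ : ℝ) : 1 - D θ = rotationMatrix (π - 2 * θ) := by
  ext i j
  fin_cases i <;> fin_cases j <;>
    simp [D, rotationMatrix, cos_pi_sub, sin_pi_sub, cos_two_mul, sin_two_mul] <;> ring

/-- The recursion `γ_R^(η−2) = (1 − D) γ_R^(η)` used in section 5 of the paper
to reduce the locality analysis to the cases `η = 1` and `η = 0`. -/
theorem γR_recursion (η θ : ℝ) :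
    γR (η - 2) θ = (1 - D θ) * γR η θ := by
  rw [one_sub_D_eq_rotationMatrix, γR_eq_reflectionMatrix, γR_eq_reflectionMatrix,
    rotationMatrix_mul_reflectionMatrix]
  congr 1
  ring
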